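/- arXiv:2506.22010 — 2 statements merged into one kernel-verified Lean document; each statement's English description precedes it below -/
import Mathlib

section
/- Let M be a matroid with finite ground set E, rank(M) = r ≥ 1, and let k ≥ 0 be an integer. Let X ⊆ E be an h-uniform set, for some integer h with 1 ≤ h ≤ r, of size at least (h−1)·((k+1)·r)^{r−1} + (k+1)·r. Then for every k-fault-tolerant basis B of M there exists a k-fault-tolerant basis B' of M such that (i) B \ cl(X) = B' \ cl(X), and (ii) B' ∩ cl(X) ⊆ X. -/
open Set

/-- The rank of a set `X` in a matroid `M`: the maximum cardinality of an
independent subset of `X`. -/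
noncomputable def mrank {α : Type*} (M : Matroid α) (X : Set α) : ℕ :=
  sSup {n : ℕ | ∃ I, M.Indep I ∧ I ⊆ X ∧ I.ncard = n}

/-- `B` is a `k`-fault-tolerant spanning set of `M`: `B ⊆ M.E` and removing any
at most `k` elements from `B` leaves a set of full rank. -/
def FTSpanning {α : Type*} (M : Matroid α) (k : ℕ) (B : Set α) : Prop :=
  B ⊆ M.E ∧ ∀ F ⊆ B, F.ncard ≤ k → mrank M (B \ F) = mrank M M.E

/-- `B` is a `k`-fault-tolerant basis of `M`: a `k`-fault-tolerant spanning set of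
minimum cardinality among all `k`-fault-tolerant spanning sets. -/
def FTBasis {α : Type*} (M : Matroid α) (k : ℕ) (B : Set α) : Prop :=
  FTSpanning M k B ∧ ∀ B', FTSpanning M k B' → B.ncard ≤ B'.ncard

/-- `X` is `h`-uniform in `M`: `rank(X) = h` and every subset of `X` of size `h`
has rank `h`. -/
def HUniform {α : Type*} (M : Matroid α) (h : ℕ) (X : Set α) : Prop :=
  mrank M X = h ∧ ∀ Y ⊆ X, Y.ncard = h → mrank M Y = h

/-
Write `r` for the rank of `M`. A minimal `k`-fault-tolerant spanning set `B` has at most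
`(k + 1) r` elements: every `e ∈ B` is critical for some fault set `F` of size at most `k`, so `e`
is not spanned by `B \ (F ∪ {e})`, and induction on the rank bounds `|B|`.

Split `B` into `B₀ = B \ cl X` and `B₁ = B ∩ cl X`. Since `X` is `h`-uniform, a flat not
containing `X` meets `X` in fewer than `h` points, and a set of fewer than `(k + 1) r` elements
spans few flats of rank below `r`; the lower bound on `|X|` therefore lets us choose greedily `|B₁|`
points `S ⊆ X` generic over `B₀`: adding `T ⊆ S` to `A ⊆ B₀` raises the rank by `|T|` until it
reaches `rank (A ∪ X)`. Then `B₀ ∪ S` is again `k`-fault tolerant. After deleting `F`, with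
`A = B₀ \ F`: `A ∪ X` spans, because `B₁ ⊆ cl X`; and `rank A + |B₁| - (k - |F ∩ B₀|) ≥ r`, because
`B` survives the deletion of `F ∩ B₀` and of `k - |F ∩ B₀|` elements of `B₁`. At least
`|B₁| - (k - |F ∩ B₀|)` points of `S` survive, so genericity gives `rank (A ∪ (S \ F)) ≥ r`.
-/

theorem Finset.card_filter_powerset_card_le {α : Type*} (s : Finset α) (d : ℕ) :
    (s.powerset.filter fun t => t.card ≤ d).card ≤ (s.card + 1) ^ d := by
  classical
  calc (s.powerset.filter fun t => t.card ≤ d).card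
      ≤ ((Finset.range (d + 1)).biUnion fun j => s.powersetCard j).card := by
        refine Finset.card_le_card fun t ht => ?_
        simp only [Finset.mem_filter, Finset.mem_powerset] at ht
        simp only [Finset.mem_biUnion, Finset.mem_range, Finset.mem_powersetCard]
        exact ⟨t.card, by omega, ht.1, rfl⟩
    _ ≤ ∑ j ∈ Finset.range (d + 1), (s.powersetCard j).card := Finset.card_biUnion_le
    _ ≤ ∑ j ∈ Finset.range (d + 1), s.card ^ j * 1 ^ (d - j) * d.choose j := by
        refine Finset.sum_le_sum fun j hj => ?_
        rw [Finset.card_powersetCard, one_pow, mul_one]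
        exact (Nat.choose_le_pow _ _).trans
          (Nat.le_mul_of_pos_right _ (Nat.choose_pos (Finset.mem_range_succ_iff.1 hj)))
    _ = (s.card + 1) ^ d := (add_pow _ _ _).symm

section

variable {α : Type*} {M : Matroid α} {k h : ℕ} {e : α} {I X Y A B C W : Set α}

section RankFinite

variable [M.RankFinite]

theorem Matroid.IsBasis'.ncard_eq_mrank (hI : M.IsBasis' I X) : I.ncard = mrank M X := by
  refine (IsGreatest.csSup_eq (s := {n | ∃ J, M.Indep J ∧ J ⊆ X ∧ J.ncard = n})
    ⟨⟨I, hI.indep, hI.subset, rfl⟩, ?_⟩).symm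
  rintro _ ⟨J, hJ, hJX, rfl⟩
  have hJI : J.encard ≤ I.encard := hI.encard_eq_eRk ▸ hJ.encard_le_eRk_of_subset hJX
  rwa [← hJ.finite.cast_ncard_eq, ← hI.indep.finite.cast_ncard_eq, Nat.cast_le] at hJI

theorem cast_mrank (X : Set α) : (mrank M X : ℕ∞) = M.eRk X := by
  obtain ⟨I, hI⟩ := M.exists_isBasis' X
  rw [← hI.ncard_eq_mrank, hI.indep.finite.cast_ncard_eq, hI.encard_eq_eRk]

theorem mrank_mono (hXY : X ⊆ Y) : mrank M X ≤ mrank M Y := by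
  have := M.eRk_mono hXY
  rwa [← cast_mrank, ← cast_mrank, Nat.cast_le] at this

theorem mrank_le_mrank_ground (X : Set α) : mrank M X ≤ mrank M M.E := by
  have := M.eRk_le_eRank X
  rwa [← M.eRk_ground, ← cast_mrank, ← cast_mrank, Nat.cast_le] at this

theorem mrank_closure (X : Set α) : mrank M (M.closure X) = mrank M X := by
  exact_mod_cast (cast_mrank _).trans ((M.eRk_closure_eq X).trans (cast_mrank X).symm)

theorem mrank_le_of_subset_closure (hXY : X ⊆ M.closure Y) : mrank M X ≤ mrank M Y :=
  (mrank_mono hXY).trans (mrank_closure Y).le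

theorem mrank_insert_of_mem_sdiff_closure (he : e ∈ M.E \ M.closure X) :
    mrank M (insert e X) = mrank M X + 1 := by
  have := M.eRk_insert_eq_add_one he
  rw [← cast_mrank, ← cast_mrank] at this
  exact_mod_cast this

theorem mrank_union_le_add_ncard (X : Set α) (hY : Y.Finite) :
    mrank M (X ∪ Y) ≤ mrank M X + Y.ncard := by
  have := M.eRk_union_le_eRk_add_encard X Y
  rw [← cast_mrank, ← cast_mrank, ← hY.cast_ncard_eq] at this
  exact_mod_cast this

theorem closure_eq_closure_of_subset_of_mrank_le (hXY : X ⊆ Y) (h : mrank M Y ≤ mrank M X) :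
    M.closure X = M.closure Y :=
  (M.isRkFinite_set X).closure_eq_closure_of_subset_of_eRk_ge_eRk hXY
    (by rw [← cast_mrank, ← cast_mrank]; exact_mod_cast h)

theorem mrank_lt_mrank_ground_of_not_subset_closure (hX : X ⊆ M.E) (hYE : Y ⊆ M.E)
    (hY : ¬ Y ⊆ M.closure X) :
    mrank M X < mrank M M.E := by
  by_contra! hle
  rw [closure_eq_closure_of_subset_of_mrank_le hX hle, M.closure_ground] at hY
  exact hY hYE

theorem ncard_le_mul_mrank (hA : A.Finite) (hAE : A ⊆ M.E)
    (hcrit : ∀ e ∈ A, ∃ F ⊆ A, F.ncard ≤ k ∧ e ∉ M.closure (A \ insert e F)) :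
    A.ncard ≤ (k + 1) * mrank M A := by
  induction hn : A.ncard using Nat.strong_induction_on generalizing A with
  | _ n ih =>
  obtain rfl | ⟨e, he⟩ := A.eq_empty_or_nonempty
  · simp [← hn]
  obtain ⟨F, hFA, hFk, heW⟩ := hcrit e he
  set W := A \ insert e F
  have hWA : W ⊆ A := sdiff_subset
  have hW' : ∀ e' ∈ W, ∃ F' ⊆ W, F'.ncard ≤ k ∧ e' ∉ M.closure (W \ insert e' F') := by
    intro e' he'
    obtain ⟨F', hF'A, hF'k, he'⟩ := hcrit e' (hWA he')
    refine ⟨F' ∩ W, inter_subset_right, (ncard_inter_le_ncard_left _ _ (hA.subset hF'A)).trans hF'k,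
      fun hcl => he' (M.closure_subset_closure (fun x hx => ?_) hcl)⟩
    simp only [mem_sdiff, mem_insert_iff, mem_inter_iff] at hx ⊢
    tauto
  have hWn : W.ncard < n :=
    hn ▸ ncard_lt_ncard (ssubset_of_subset_not_subset hWA fun hAW => (hAW he).2 (mem_insert _ _)) hA
  have hWrank : mrank M W + 1 ≤ mrank M A :=
    (mrank_insert_of_mem_sdiff_closure ⟨hAE he, heW⟩).ge.trans (mrank_mono (insert_subset he hWA))
  calc n = A.ncard := hn.symm
    _ ≤ W.ncard + (insert e F).ncard :=
        ncard_le_ncard_sdiff_add_ncard _ _ ((hA.subset hFA).insert e)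
    _ ≤ (k + 1) * mrank M W + (k + 1) := by
        gcongr
        · exact ih _ hWn (hA.subset hWA) (hWA.trans hAE) hW' rfl
        · exact (ncard_insert_le e F).trans (by omega)
    _ ≤ (k + 1) * mrank M A := by nlinarith

theorem HUniform.ncard_inter_closure_lt (hX : HUniform M h X) (hXE : X ⊆ M.E)
    (hXW : ¬ X ⊆ M.closure W) : (X ∩ M.closure W).ncard < h := by
  by_contra! hle
  obtain ⟨Y, hY, hYcard⟩ := exists_subset_card_eq hle
  have hYX : Y ⊆ X := hY.trans inter_subset_left
  have hcl : M.closure Y = M.closure X :=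
    closure_eq_closure_of_subset_of_mrank_le hYX (by rw [hX.1, hX.2 Y hYX hYcard])
  exact hXW ((M.subset_closure X hXE).trans
    (hcl ▸ M.closure_subset_closure_of_subset_closure (hY.trans inter_subset_right)))

end RankFinite

def IsGenericOver (M : Matroid α) (X C S : Set α) : Prop :=
  ∀ A ⊆ C, ∀ T ⊆ S, min (mrank M (A ∪ X)) (mrank M A + T.ncard) ≤ mrank M (A ∪ T)

section Finite

variable [M.Finite]

theorem FTBasis.exists_notMem_closure (hB : FTBasis M k B) (he : e ∈ B) :
    ∃ F ⊆ B, F.ncard ≤ k ∧ e ∉ M.closure (B \ insert e F) := by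
  by_contra! hcl
  have hBfin : B.Finite := M.set_finite B hB.1.1
  have hspan : FTSpanning M k (B \ {e}) := by
    refine ⟨sdiff_subset.trans hB.1.1, fun F hF hFk => ?_⟩
    have heF : e ∉ F := fun heF => (hF heF).2 rfl
    rw [sdiff_sdiff, ← insert_eq, ← mrank_closure,
      ← M.closure_insert_eq_of_mem_closure (hcl F (hF.trans sdiff_subset) hFk), mrank_closure,
      insert_sdiff_insert, insert_eq_of_mem (show e ∈ B \ F from ⟨he, heF⟩)]
    exact hB.1.2 F (hF.trans sdiff_subset) hFk
  have := hB.2 _ hspan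
  rw [ncard_sdiff_singleton_of_mem he] at this
  have := (ncard_pos hBfin).2 ⟨e, he⟩
  omega

theorem FTBasis.ncard_le (hB : FTBasis M k B) : B.ncard ≤ (k + 1) * mrank M M.E :=
  (ncard_le_mul_mrank (M.set_finite B hB.1.1) hB.1.1 fun _ he => hB.exists_notMem_closure he).trans
    (Nat.mul_le_mul_left _ (mrank_le_mrank_ground B))

theorem HUniform.exists_mem_forall_notMem_closure (hX : HUniform M h X) (hXE : X ⊆ M.E)
    (hC : C ⊆ M.E) (hcard : (h - 1) * (C.ncard + 1) ^ (mrank M M.E - 1) + C.ncard < X.ncard) :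
    ∃ x ∈ X \ C, ∀ W ⊆ C, ¬ X ⊆ M.closure W → x ∉ M.closure W := by
  classical
  -- If `X ⊄ cl W` for some `W ⊆ C`, then `cl W` is the closure of a basis of `W`, a subset of `C`
  -- of size at most `r - 1`, and it meets `X` in fewer than `h` points: the points of `X` lying
  -- in such flats, together with `C`, are too few to exhaust `X`.
  have hCfin : C.Finite := M.set_finite C hC
  set d := mrank M M.E - 1
  set flats := hCfin.toFinset.powerset.filter fun t : Finset α => t.card ≤ d ∧ ¬ X ⊆ M.closure t
  set bad := ⋃ t ∈ flats, X ∩ M.closure t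
  have hbad : bad.ncard ≤ (h - 1) * (C.ncard + 1) ^ d :=
    calc bad.ncard ≤ ∑ t ∈ flats, (X ∩ M.closure t).ncard := Finset.set_ncard_biUnion_le _ _
      _ ≤ ∑ t ∈ flats, (h - 1) := Finset.sum_le_sum fun t ht =>
          Nat.le_sub_one_of_lt (hX.ncard_inter_closure_lt hXE (Finset.mem_filter.1 ht).2.2)
      _ = flats.card * (h - 1) := by rw [Finset.sum_const, smul_eq_mul]
      _ ≤ (C.ncard + 1) ^ d * (h - 1) := by
          gcongr
          rw [ncard_eq_toFinset_card C hCfin]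
          exact (Finset.card_le_card (Finset.monotone_filter_right _ fun _ _ ht => ht.1)).trans
            (Finset.card_filter_powerset_card_le _ d)
      _ = (h - 1) * (C.ncard + 1) ^ d := mul_comm _ _
  obtain ⟨x, hxX, hx⟩ : ∃ x ∈ X, x ∉ bad ∪ C := by
    by_contra! hsub
    have := ncard_le_ncard hsub ((M.set_finite X hXE |>.subset
      (iUnion₂_subset fun _ _ => inter_subset_left)).union hCfin)
    have := ncard_union_le bad C
    omega
  refine ⟨x, ⟨hxX, fun hxC => hx (Or.inr hxC)⟩, fun W hWC hXW hxW => hx (Or.inl ?_)⟩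
  obtain ⟨I, hI⟩ := M.exists_isBasis' W
  have hIfin : I.Finite := hI.indep.finite
  have hId : I.ncard ≤ d := by
    have := mrank_lt_mrank_ground_of_not_subset_closure (hWC.trans hC) hXE hXW
    rw [← hI.ncard_eq_mrank] at this
    omega
  simp only [bad, mem_iUnion]
  refine ⟨hIfin.toFinset, ?_, hxX, by rwa [Finite.coe_toFinset, hI.closure_eq_closure]⟩
  simp only [flats, Finset.mem_filter, Finset.mem_powerset, Finite.toFinset_subset_toFinset,
    Finite.coe_toFinset, hI.closure_eq_closure, ← ncard_eq_toFinset_card I hIfin]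
  exact ⟨hI.subset.trans hWC, hId, hXW⟩

theorem HUniform.exists_subset_isGenericOver (hX : HUniform M h X) (hXE : X ⊆ M.E)
    (hC : C ⊆ M.E) {m : ℕ}
    (hm : (h - 1) * (C.ncard + m) ^ (mrank M M.E - 1) + (C.ncard + m) ≤ X.ncard) :
    ∃ S ⊆ X, S.ncard = m ∧ IsGenericOver M X C S := by
  induction m with
  | zero =>
    refine ⟨∅, empty_subset _, ncard_empty _, fun A _ T hT => ?_⟩
    simp [subset_empty_iff.1 hT]
  | succ m ih =>
    obtain ⟨S, hSX, hScard, hS⟩ := ih (le_trans (Nat.add_le_add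
      (Nat.mul_le_mul_left _ (Nat.pow_le_pow_left (by omega) _)) (by omega)) hm)
    have hCS : (C ∪ S).ncard ≤ C.ncard + m := hScard ▸ ncard_union_le C S
    obtain ⟨x, ⟨hxX, hxCS⟩, hx⟩ := hX.exists_mem_forall_notMem_closure hXE
      (union_subset hC (hSX.trans hXE))
      (lt_of_lt_of_le (Nat.add_lt_add_of_le_of_lt
        (Nat.mul_le_mul_left _ (Nat.pow_le_pow_left (by omega) _)) (by omega)) hm)
    have hSfin : S.Finite := M.set_finite S (hSX.trans hXE)
    refine ⟨insert x S, insert_subset hxX hSX,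
      by rw [ncard_insert_of_notMem (fun hxS => hxCS (Or.inr hxS)) hSfin, hScard],
      fun A hA T hT => ?_⟩
    by_cases hxT : x ∈ T
    swap
    · exact hS A hA T fun y hy => (hT hy).resolve_left fun hyx => hxT (hyx ▸ hy)
    set W := A ∪ (T \ {x})
    have hTS : T \ {x} ⊆ S := fun y hy => (hT hy.1).resolve_left hy.2
    have hAT : A ∪ T = insert x W := by
      rw [← union_insert, insert_sdiff_singleton, insert_eq_of_mem hxT]
    by_cases hXW : X ⊆ M.closure W
    · refine (min_le_left _ _).trans (mrank_le_of_subset_closure (union_subset ?_ ?_))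
      · exact M.subset_closure_of_subset' subset_union_left (hA.trans hC)
      · exact hXW.trans (M.closure_subset_closure (hAT ▸ subset_insert x W))
    · have hWCS : W ⊆ C ∪ S := union_subset_union hA hTS
      have hrank := mrank_insert_of_mem_sdiff_closure ⟨hXE hxX, hx W hWCS hXW⟩
      have hTcard : T.ncard = (T \ {x}).ncard + 1 :=
        (ncard_sdiff_singleton_add_one hxT (hSfin.insert x |>.subset hT)).symm
      have hSW : min (mrank M (A ∪ X)) (mrank M A + (T \ {x}).ncard) ≤ mrank M W := hS A hA _ hTS
      rw [hAT, hrank, hTcard]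
      omega

theorem FTSpanning.union_of_isGenericOver {B₀ B₁ S : Set α} (hB : FTSpanning M k (B₀ ∪ B₁))
    (hB₁ : B₁ ⊆ M.closure X) (hSE : S ⊆ M.E) (hdisj : Disjoint B₀ S) (hcard : B₁.ncard ≤ S.ncard)
    (hS : IsGenericOver M X B₀ S) :
    FTSpanning M k (B₀ ∪ S) := by
  obtain ⟨hBE, hBF⟩ := hB
  have hB₀E : B₀ ⊆ M.E := subset_union_left.trans hBE
  refine ⟨union_subset hB₀E hSE, fun F hF hFk => ?_⟩
  have hFfin : F.Finite := M.set_finite F (hF.trans (union_subset hB₀E hSE))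
  have hSfin : S.Finite := M.set_finite S hSE
  have hB₁fin : B₁.Finite := M.set_finite B₁ (subset_union_right.trans hBE)
  set j := (B₀ ∩ F).ncard
  have hjS : j + (S ∩ F).ncard ≤ k := by
    rw [← ncard_union_eq (hdisj.mono inter_subset_left inter_subset_left)
      (hFfin.inter_of_right _) (hFfin.inter_of_right _)]
    exact (ncard_le_ncard (union_subset inter_subset_right inter_subset_right) hFfin).trans hFk
  obtain ⟨G, hGB₁, hGcard⟩ := exists_subset_card_eq (min_le_left B₁.ncard (k - j))
  have hspan_X : mrank M M.E ≤ mrank M (B₀ \ F ∪ X) := by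
    rw [← hBF (B₀ ∩ F) (inter_subset_left.trans subset_union_left)
      ((ncard_inter_le_ncard_right _ _ hFfin).trans hFk)]
    refine mrank_le_of_subset_closure fun x ⟨hx, hxF⟩ => hx.elim (fun hx => ?_) (fun hx => ?_)
    · exact M.subset_closure_of_subset' subset_union_left (sdiff_subset.trans hB₀E)
        ⟨hx, fun hxF' => hxF ⟨hx, hxF'⟩⟩
    · exact M.closure_subset_closure subset_union_right (hB₁ hx)
  have hspan_T : mrank M M.E ≤ mrank M (B₀ \ F) + (S \ F).ncard :=
    calc mrank M M.E = mrank M ((B₀ ∪ B₁) \ (B₀ ∩ F ∪ G)) :=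
          (hBF _ (union_subset_union inter_subset_left hGB₁)
            ((ncard_union_le _ _).trans (by omega))).symm
      _ ≤ mrank M (B₀ \ F ∪ B₁ \ G) := mrank_mono fun x ⟨hx, hxFG⟩ => by
          simp only [mem_union, mem_inter_iff, not_or] at hx hxFG
          exact hx.elim (fun hx => Or.inl ⟨hx, fun hxF => hxFG.1 ⟨hx, hxF⟩⟩)
            fun hx => Or.inr ⟨hx, hxFG.2⟩
      _ ≤ mrank M (B₀ \ F) + (B₁ \ G).ncard :=
          mrank_union_le_add_ncard _ (hB₁fin.subset sdiff_subset)
      _ ≤ mrank M (B₀ \ F) + (S \ F).ncard := by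
          have := ncard_inter_add_ncard_sdiff_eq_ncard S F hSfin
          rw [ncard_sdiff hGB₁ (hB₁fin.subset hGB₁), hGcard]
          omega
  refine le_antisymm (mrank_le_mrank_ground _) ?_
  rw [union_sdiff_distrib]
  exact (le_min hspan_X hspan_T).trans (hS _ sdiff_subset _ sdiff_subset)

end Finite

end

theorem statement6_general {α : Type*} (M : Matroid α) (hE : M.E.Finite)
    (r : ℕ) (hr : r = mrank M M.E) (k : ℕ) (h : ℕ)
    (X : Set α) (hXE : X ⊆ M.E) (hX : HUniform M h X)
    (hXcard : (h - 1) * ((k + 1) * r) ^ (r - 1) + (k + 1) * r ≤ X.ncard)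
    (B : Set α) (hB : FTBasis M k B) :
    ∃ B' : Set α, FTBasis M k B' ∧
      B \ M.closure X = B' \ M.closure X ∧ B' ∩ M.closure X ⊆ X := by
  have : M.Finite := ⟨hE⟩
  have hsplit := ncard_inter_add_ncard_sdiff_eq_ncard B (M.closure X) (M.set_finite B hB.1.1)
  set B₀ := B \ M.closure X
  set m := (B ∩ M.closure X).ncard
  have hB₀m : B₀.ncard + m ≤ (k + 1) * r := by
    have := hr ▸ hB.ncard_le
    omega
  have hXm : (h - 1) * (B₀.ncard + m) ^ (mrank M M.E - 1) + (B₀.ncard + m) ≤ X.ncard := by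
    rw [← hr]
    exact (Nat.add_le_add (Nat.mul_le_mul_left _ (Nat.pow_le_pow_left hB₀m _)) hB₀m).trans hXcard
  obtain ⟨S, hSX, hScard, hS⟩ := hX.exists_subset_isGenericOver hXE (sdiff_subset.trans hB.1.1) hXm
  have hSclX : S ⊆ M.closure X := hSX.trans (M.subset_closure X hXE)
  have hdisj : Disjoint B₀ S := disjoint_left.2 fun x hx hxS => hx.2 (hSclX hxS)
  have hBsplit : FTSpanning M k (B₀ ∪ B ∩ M.closure X) := by rw [sdiff_union_inter]; exact hB.1
  have hFT : FTSpanning M k (B₀ ∪ S) :=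
    hBsplit.union_of_isGenericOver inter_subset_right (hSX.trans hXE) hdisj hScard.ge hS
  refine ⟨B₀ ∪ S, ⟨hFT, fun B' hB' => le_trans ?_ (hB.2 B' hB')⟩, ?_, ?_⟩
  · rw [ncard_union_eq hdisj (M.set_finite B₀ (sdiff_subset.trans hB.1.1))
      (M.set_finite S (hSX.trans hXE)), hScard]
    omega
  · rw [union_sdiff_distrib, sdiff_eq_empty.2 hSclX, union_empty, Set.sdiff_sdiff, union_self]
  · rintro x ⟨hx | hx, hxcl⟩
    · exact absurd hxcl hx.2
    · exact hSX hx

/-- Lemma: Let `M` have finite ground set and rank `r ≥ 1`, `k ≥ 0`, and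
let `X ⊆ M.E` be an `h`-uniform set (`1 ≤ h ≤ r`) of size at least
`(h−1)·((k+1)·r)^(r−1) + (k+1)·r`. Then for every `k`-fault-tolerant basis `B` there is
a `k`-fault-tolerant basis `B'` with `B \ cl(X) = B' \ cl(X)` and `B' ∩ cl(X) ⊆ X`. -/
theorem statement6 {α : Type*} (M : Matroid α) (hE : M.E.Finite)
    (r : ℕ) (hr : r = mrank M M.E) (hr1 : 1 ≤ r) (k : ℕ)
    (h : ℕ) (hh1 : 1 ≤ h) (hhr : h ≤ r)
    (X : Set α) (hXE : X ⊆ M.E) (hX : HUniform M h X)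
    (hXcard : (h - 1) * ((k + 1) * r) ^ (r - 1) + (k + 1) * r ≤ X.ncard)
    (B : Set α) (hB : FTBasis M k B) :
    ∃ B' : Set α, FTBasis M k B' ∧
      B \ M.closure X = B' \ M.closure X ∧ B' ∩ M.closure X ⊆ X :=
  statement6_general M hE r hr k h X hXE hX hXcard B hB
end

section
/- Let M be a matroid with finite ground set E, rank(M) = r ≥ 1, and let k ≥ 0 be an integer. Let B ⊆ E be a k-fault-tolerant spanning set, let x ∈ B, and set Y = B \ {x}. Suppose y ∈ E \ B is an element such that for every F ⊆ Y with |F| ≤ k and rank(Y \ F) < r, one has y ∉ cl(Y \ F). Then Y ∪ {y} is a k-fault-tolerant spanning set of M (of the same cardinality as B). -/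
open Set

/-
As `M` has finite rank, `rank X = rank M` just says that `X` spans `M`.
Removing at most `k` elements from `insert y (B \ {x})` either removes `y`, and then the
result is `B` minus at most `k` elements, or leaves `insert y Z` with `Z = (B \ {x}) \ F`.
In the second case `insert x Z` spans, so if `Z` does not span then `y ∉ cl Z` while
`y ∈ cl (insert x Z)`, and the Mac Lane–Steinitz exchange puts `x` in `cl (insert y Z)`.
-/

namespace Matroid

variable {α : Type*} {M : Matroid α} {B X Z : Set α} {x y : α} {k : ℕ}

lemma cast_mrank_eq_eRk (hX : M.IsRkFinite X) : (mrank M X : ℕ∞) = M.eRk X := by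
  obtain ⟨I, hI, hIfin⟩ := hX.exists_finite_isBasis'
  have hmax : IsGreatest {n : ℕ | ∃ J, M.Indep J ∧ J ⊆ X ∧ J.ncard = n} I.ncard := by
    refine ⟨⟨I, hI.indep, hI.subset, rfl⟩, ?_⟩
    rintro _ ⟨J, hJ, hJX, rfl⟩
    have hJI : J.encard ≤ I.encard := hI.encard_eq_eRk ▸ hJ.encard_le_eRk_of_subset hJX
    rwa [← (hX.finite_of_indep_subset hJ hJX).cast_ncard_eq, ← hIfin.cast_ncard_eq,
      Nat.cast_le] at hJI
  rw [mrank, hmax.csSup_eq, hIfin.cast_ncard_eq, hI.encard_eq_eRk]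

lemma mrank_eq_mrank_ground_iff [M.RankFinite] (hX : X ⊆ M.E) :
    mrank M X = mrank M M.E ↔ M.Spanning X := by
  rw [spanning_iff_eRk_le hX, ← Nat.cast_inj (R := ℕ∞), cast_mrank_eq_eRk (M.isRkFinite_set X),
    cast_mrank_eq_eRk (M.isRkFinite_set M.E), eRk_ground]
  exact ⟨fun h => h.ge, (M.eRk_le_eRank X).antisymm⟩

lemma mrank_lt_mrank_ground_iff [M.RankFinite] (hX : X ⊆ M.E) :
    mrank M X < mrank M M.E ↔ ¬ M.Spanning X := by
  rw [spanning_iff_eRk_le hX, not_le, ← Nat.cast_lt (α := ℕ∞),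
    cast_mrank_eq_eRk (M.isRkFinite_set X), cast_mrank_eq_eRk (M.isRkFinite_set M.E), eRk_ground]

lemma ftSpanning_iff [M.RankFinite] :
    FTSpanning M k B ↔ B ⊆ M.E ∧ ∀ F ⊆ B, F.ncard ≤ k → M.Spanning (B \ F) :=
  and_congr_right fun hB => forall₂_congr fun _ _ => imp_congr_right fun _ =>
    mrank_eq_mrank_ground_iff (sdiff_subset.trans hB)

lemma Spanning.insert_exchange (hxZ : M.Spanning (insert x Z)) (hy : y ∈ M.E)
    (hyZ : ¬ M.Spanning Z → y ∉ M.closure Z) : M.Spanning (insert y Z) := by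
  have hZ : Z ⊆ M.E := (subset_insert x Z).trans hxZ.subset_ground
  by_cases hZsp : M.Spanning Z
  · exact hZsp.superset (subset_insert y Z)
  have hx : x ∈ M.closure (insert y Z) :=
    mem_closure_insert (hyZ hZsp) (hxZ.closure_eq ▸ hy)
  rw [spanning_iff_ground_subset_closure (insert_subset hy hZ), ← hxZ.closure_eq]
  exact M.closure_subset_closure_of_subset_closure
    (insert_subset hx ((subset_insert y Z).trans (M.subset_closure _ (insert_subset hy hZ))))

lemma forall_spanning_sdiff_exchange (hB : ∀ F ⊆ B, F.ncard ≤ k → M.Spanning (B \ F))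
    (hx : x ∈ B) (hyE : y ∈ M.E) (hyB : y ∉ B)
    (hy : ∀ F ⊆ (B \ {x}), F.ncard ≤ k → ¬ M.Spanning ((B \ {x}) \ F) →
      y ∉ M.closure ((B \ {x}) \ F)) :
    ∀ F ⊆ (insert y (B \ {x})), F.ncard ≤ k → M.Spanning (insert y (B \ {x}) \ F) := by
  intro F hF hFk
  by_cases hyF : y ∈ F
  · have hxF : x ∉ F := fun h => by
      obtain rfl | h' := hF h
      exacts [hyB hx, h'.2 rfl]
    have hset : insert y (B \ {x}) \ F = B \ insert x (F \ {y}) := by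
      ext a
      simp only [mem_sdiff, mem_insert_iff, mem_singleton_iff]
      grind
    rw [hset]
    refine hB _ (insert_subset hx fun a ha => ?_) ((ncard_exchange hxF hyF).le.trans hFk)
    exact ((hF ha.1).resolve_left ha.2).1
  · have hFB : F ⊆ B \ {x} := fun a ha => (hF ha).resolve_left (by rintro rfl; exact hyF ha)
    rw [insert_sdiff_of_notMem _ hyF]
    have hBF : B \ F = insert x ((B \ {x}) \ F) := by
      rw [← insert_sdiff_of_notMem _ (fun h => (hFB h).2 rfl), insert_sdiff_singleton,
        insert_eq_of_mem hx]
    exact (hBF ▸ hB F (hFB.trans sdiff_subset) hFk).insert_exchange hyE (hy F hFB hFk)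

end Matroid

open Matroid

theorem statement8_general {α : Type*} (M : Matroid α) (hE : M.E.Finite)
    (r : ℕ) (hr : r = mrank M M.E) (k : ℕ)
    (B : Set α) (hB : FTSpanning M k B)
    (x : α) (hx : x ∈ B) (Y : Set α) (hY : Y = B \ {x})
    (y : α) (hy : y ∈ M.E \ B)
    (hygood : ∀ F ⊆ Y, F.ncard ≤ k → mrank M (Y \ F) < r → y ∉ M.closure (Y \ F)) :
    FTSpanning M k (Y ∪ {y}) ∧ (Y ∪ {y}).ncard = B.ncard := by
  have : M.Finite := ⟨hE⟩
  subst hr hY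
  obtain ⟨hBE, hBsp⟩ := ftSpanning_iff.1 hB
  rw [union_singleton, ftSpanning_iff]
  refine ⟨⟨insert_subset hy.1 (sdiff_subset.trans hBE),
    forall_spanning_sdiff_exchange hBsp hx hy.1 hy.2 ?_⟩, ncard_exchange hy.2 hx⟩
  intro F hFY hFk hF
  exact hygood F hFY hFk
    ((mrank_lt_mrank_ground_iff (sdiff_subset.trans (sdiff_subset.trans hBE))).2 hF)

/-- Let `M` have finite ground set and rank `r ≥ 1`, let `B` be a
`k`-fault-tolerant spanning set, `x ∈ B`, `Y = B \ {x}`, and let `y ∈ M.E \ B` be such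
that for every `F ⊆ Y` with `|F| ≤ k` and `rank(Y \ F) < r`, one has `y ∉ cl(Y \ F)`.
Then `Y ∪ {y}` is a `k`-fault-tolerant spanning set of the same cardinality as `B`. -/
theorem statement8 {α : Type*} (M : Matroid α) (hE : M.E.Finite)
    (r : ℕ) (hr : r = mrank M M.E) (hr1 : 1 ≤ r) (k : ℕ)
    (B : Set α) (hB : FTSpanning M k B)
    (x : α) (hx : x ∈ B) (Y : Set α) (hY : Y = B \ {x})
    (y : α) (hy : y ∈ M.E \ B)
    (hygood : ∀ F ⊆ Y, F.ncard ≤ k → mrank M (Y \ F) < r → y ∉ M.closure (Y \ F)) :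
    FTSpanning M k (Y ∪ {y}) ∧ (Y ∪ {y}).ncard = B.ncard :=
  statement8_general M hE r hr k B hB x hx Y hY y hy hygood
end
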